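/- arXiv:2201.07178 — 2 statements merged into one kernel-verified Lean document; each statement's English description precedes it below -/
import Mathlib

section
/- There are exactly 24 baskets B satisfying σ(B) = 24. -/
open PowerSeries

/-- A quotient pair `(r,a)`: `r ≥ 2`, `1 ≤ a ≤ r-1`, `gcd(a,r) = 1`. -/
def IsQuotientPair (p : ℕ × ℕ) : Prop :=
  2 ≤ p.1 ∧ 1 ≤ p.2 ∧ p.2 ≤ p.1 - 1 ∧ Nat.gcd p.2 p.1 = 1

/-- A normalized quotient pair additionally satisfies `2a ≤ r`. -/
def IsNormalizedPair (p : ℕ × ℕ) : Prop :=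
  IsQuotientPair p ∧ 2 * p.2 ≤ p.1

/-- A basket is a finite multiset of normalized quotient pairs. -/
def IsBasket (B : Multiset (ℕ × ℕ)) : Prop :=
  ∀ p ∈ B, IsNormalizedPair p

/-- `bInv (r,a)` is the unique `b` with `1 ≤ b ≤ r-1` and `a·b ≡ 1 (mod r)`,
realised as the value of the inverse of `a` in `ZMod r`. -/
def bInv (p : ℕ × ℕ) : ℕ := ((p.2 : ZMod p.1)⁻¹).val

/-- `σ(r,a) = r - 1/r`. -/
def sigmaP (p : ℕ × ℕ) : ℚ := (p.1 : ℚ) - 1 / (p.1 : ℚ)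

/-- `δ(r,a) = b(r-b)/r` where `b = bInv (r,a)`. -/
def deltaP (p : ℕ × ℕ) : ℚ :=
  (bInv p : ℚ) * ((p.1 : ℚ) - (bInv p : ℚ)) / (p.1 : ℚ)

/-- `σ(B)`: sum of `σ` over the basket, with multiplicity. -/
def sigmaB (B : Multiset (ℕ × ℕ)) : ℚ := (B.map sigmaP).sum

/-- `δ(B)`: sum of `δ` over the basket, with multiplicity. -/
def deltaB (B : Multiset (ℕ × ℕ)) : ℚ := (B.map deltaP).sum

/-- `g_min(B) = max(-2, ⌊(2 - δ(B))/2⌋ + 1)`. -/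
def gmin (B : Multiset (ℕ × ℕ)) : ℤ := max (-2) (⌊(2 - deltaB B) / 2⌋ + 1)

/-- `g_max(B,κ) = ⌊(2 - δ(B) + κ(24 - σ(B)))/2⌋`. -/
def gmax (B : Multiset (ℕ × ℕ)) (κ : ℚ) : ℤ :=
  ⌊(2 - deltaB B + κ * (24 - sigmaB B)) / 2⌋

/-- `L_κ`: pairs `(g,B)` of an integer and a basket with `σ(B) < 24` and
`g_min(B) ≤ g ≤ g_max(B,κ)`. -/
def Lset (κ : ℚ) : Set (ℤ × Multiset (ℕ × ℕ)) :=
  {gB | IsBasket gB.2 ∧ sigmaB gB.2 < 24 ∧ gmin gB.2 ≤ gB.1 ∧ gB.1 ≤ gmax gB.2 κ}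

/-- The orbifold contribution `Q_{(r,a)}` to the Hilbert series. -/
noncomputable def Qps (p : ℕ × ℕ) : PowerSeries ℚ :=
  PowerSeries.C (R := ℚ) (1 / (2 * (p.1 : ℚ))) *
    (∑ i ∈ Finset.Icc 1 (p.1 - 1),
      PowerSeries.C (R := ℚ) ((((bInv p * i) % p.1 : ℕ) : ℚ) *
        ((p.1 : ℚ) - (((bInv p * i) % p.1 : ℕ) : ℚ))) * (X : PowerSeries ℚ) ^ i) *
    (1 - X)⁻¹ * (1 - X ^ p.1)⁻¹

/-- The Hilbert series `P_{g,B}` of a genus–basket pair. -/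
noncomputable def Pgb (g : ℤ) (B : Multiset (ℕ × ℕ)) : PowerSeries ℚ :=
  (1 + X) * ((1 - X)⁻¹) ^ 2
    + PowerSeries.C (R := ℚ) ((2 * (g : ℚ) - 2 + deltaB B) / 2) *
        (X * (1 + X) * ((1 - X)⁻¹) ^ 4)
    - (B.map Qps).sum

/-- A pair `(g,B)` is degenerate if the coefficients of `P_{g,B}` begin
`1,1,1,0,…` or `1,1,1,1,1,0,…`. -/
def Degenerate (g : ℤ) (B : Multiset (ℕ × ℕ)) : Prop :=
  (coeff (R := ℚ) 1 (Pgb g B) = 1 ∧ coeff (R := ℚ) 2 (Pgb g B) = 1 ∧ coeff (R := ℚ) 3 (Pgb g B) = 0) ∨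
  (coeff (R := ℚ) 1 (Pgb g B) = 1 ∧ coeff (R := ℚ) 2 (Pgb g B) = 1 ∧ coeff (R := ℚ) 3 (Pgb g B) = 1 ∧
   coeff (R := ℚ) 4 (Pgb g B) = 1 ∧ coeff (R := ℚ) 5 (Pgb g B) = 0)

section Aux

instance : DecidablePred IsQuotientPair := fun p =>
  decidable_of_iff (2 ≤ p.1 ∧ 1 ≤ p.2 ∧ p.2 ≤ p.1 - 1 ∧ Nat.gcd p.2 p.1 = 1) Iff.rfl

instance : DecidablePred IsNormalizedPair := fun p =>
  decidable_of_iff (IsQuotientPair p ∧ 2 * p.2 ≤ p.1) Iff.rfl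

instance : DecidablePred IsBasket := fun B =>
  decidable_of_iff (∀ p ∈ B, IsNormalizedPair p) Iff.rfl

/-- Integer weight: `5354228880 = lcm(1,…,24)` times `σ(r,a)`, for `r ≤ 24`. -/
def wP (p : ℕ × ℕ) : ℕ := 5354228880 * p.1 - 5354228880 / p.1

/-- All normalized pairs with `r ≤ 24`, in a fixed order. -/
def pairsList : List (ℕ × ℕ) :=
  (List.range 25).flatMap (fun r =>
    (List.range 13).filterMap (fun a =>
      if IsNormalizedPair (r, a) then some (r, a) else none))

/-- Depth-first search for all multisets drawn (in order) from the alphabet `alpha`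
with `wP`-sum exactly `t`.  The alphabet is assumed nondecreasing in `wP`, which
justifies cutting the whole branch when `wP p > t`. -/
def search : ℕ → List (ℕ × ℕ) → ℕ → List (Multiset (ℕ × ℕ))
  | 0, _, _ => []
  | fuel + 1, alpha, t =>
    if t = 0 then [0]
    else
      match alpha with
      | [] => []
      | p :: ps =>
        if wP p ≤ t then
          (search fuel (p :: ps) (t - wP p)).map (fun B => p ::ₘ B) ++ search fuel ps t
        else []

lemma search_succ_t0 (fuel : ℕ) (alpha : List (ℕ × ℕ)) : search (fuel + 1) alpha 0 = [0] := by
  simp [search]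

lemma search_succ_cons (fuel : ℕ) (p : ℕ × ℕ) (ps : List (ℕ × ℕ)) {t : ℕ} (ht : t ≠ 0) :
    search (fuel + 1) (p :: ps) t =
      if wP p ≤ t then
        (search fuel (p :: ps) (t - wP p)).map (fun B => p ::ₘ B) ++ search fuel ps t
      else [] := by
  simp [search, ht]

/-- Lists drawn in-order (with repetition) from an alphabet list. -/
inductive SChain : List (ℕ × ℕ) → List (ℕ × ℕ) → Prop
  | nil (alpha) : SChain [] alpha
  | cons (p ps L) : SChain L (p :: ps) → SChain (p :: L) (p :: ps)
  | skip (p ps L) : SChain L ps → SChain L (p :: ps)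

lemma SChain.mem_of_mem {L alpha : List (ℕ × ℕ)} (h : SChain L alpha) :
    ∀ q ∈ L, q ∈ alpha := by
  induction h with
  | nil alpha => intro q hq; simp at hq
  | cons p ps L hch ih =>
    intro q hq
    rcases List.mem_cons.1 hq with h | h
    · simp [h]
    · exact ih q h
  | skip p ps L hch ih =>
    intro q hq
    exact List.mem_cons_of_mem _ (ih q hq)

lemma search_complete {L alpha : List (ℕ × ℕ)} (h : SChain L alpha) :
    ∀ (fuel t : ℕ), L.length + alpha.length + 1 ≤ fuel →
      alpha.Pairwise (fun x y => wP x ≤ wP y) →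
      (∀ q ∈ L, 0 < wP q) → (L.map wP).sum = t →
      (↑L : Multiset (ℕ × ℕ)) ∈ search fuel alpha t := by
  induction h with
  | nil alpha =>
    intro fuel t hfuel _ _ hsum
    obtain ⟨f, rfl⟩ : ∃ f, fuel = f + 1 := ⟨fuel - 1, by omega⟩
    simp only [List.map_nil, List.sum_nil] at hsum
    subst hsum
    rw [search_succ_t0]
    simp
  | cons p ps L hch ih =>
    intro fuel t hfuel hsort hpos hsum
    obtain ⟨f, rfl⟩ : ∃ f, fuel = f + 1 := ⟨fuel - 1, by omega⟩
    have hp : 0 < wP p := hpos p (by simp)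
    have hrest : ∀ q ∈ L, 0 < wP q := fun q hq => hpos q (List.mem_cons_of_mem _ hq)
    simp only [List.map_cons, List.sum_cons] at hsum
    have ht : t ≠ 0 := by omega
    have hle : wP p ≤ t := by omega
    rw [search_succ_cons _ _ _ ht, if_pos hle]
    apply List.mem_append_left
    have hmem := ih f (t - wP p) (by simp at hfuel ⊢; omega) hsort hrest (by omega)
    exact List.mem_map.2 ⟨↑L, hmem, rfl⟩
  | skip p ps L hch ih =>
    intro fuel t hfuel hsort hpos hsum
    obtain ⟨f, rfl⟩ : ∃ f, fuel = f + 1 := ⟨fuel - 1, by omega⟩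
    obtain ⟨hsort1, hsort2⟩ := List.pairwise_cons.1 hsort
    by_cases ht : t = 0
    · subst ht
      have : L = [] := by
        cases L with
        | nil => rfl
        | cons q L' =>
          exfalso
          have h1 : 0 < wP q := hpos q (by simp)
          simp only [List.map_cons, List.sum_cons] at hsum
          omega
      subst this
      rw [search_succ_t0]
      simp
    · rw [search_succ_cons _ _ _ ht]
      have hle : wP p ≤ t := by
        cases L with
        | nil => simp at hsum; omega
        | cons q L' =>
          have hq : q ∈ ps := hch.mem_of_mem q (by simp)
          have h1 : wP p ≤ wP q := hsort1 q hq
          simp only [List.map_cons, List.sum_cons] at hsum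
          omega
      rw [if_pos hle]
      apply List.mem_append_right
      exact ih f t (by simp at hfuel ⊢; omega) hsort2 hpos hsum

lemma exists_schain : ∀ (alpha : List (ℕ × ℕ)) (B : Multiset (ℕ × ℕ)),
    (∀ p ∈ B, p ∈ alpha) → ∃ L : List (ℕ × ℕ), (↑L : Multiset (ℕ × ℕ)) = B ∧ SChain L alpha := by
  intro alpha
  induction alpha with
  | nil =>
    intro B hB
    refine ⟨[], ?_, SChain.nil _⟩
    have : B = 0 := Multiset.eq_zero_of_forall_notMem (fun x hx => by simpa using hB x hx)
    simp [this]
  | cons p ps ih =>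
    intro B hB
    obtain ⟨L', hL'eq, hL'ch⟩ := ih (B.filter (fun q => ¬ q = p)) (by
      intro q hq
      have hq1 := Multiset.of_mem_filter hq
      have hq2 := hB q (Multiset.mem_of_mem_filter hq)
      simp at hq2
      tauto)
    refine ⟨List.replicate (B.count p) p ++ L', ?_, ?_⟩
    · show (↑(List.replicate (Multiset.count p B) p) + ↑L' : Multiset (ℕ × ℕ)) = B
      rw [hL'eq, Multiset.coe_replicate]
      conv_rhs => rw [← Multiset.filter_add_not (fun q => q = p) B]
      congr 1
      rw [Multiset.filter_eq']
    · have base : SChain L' (p :: ps) := SChain.skip _ _ _ hL'ch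
      generalize B.count p = n
      induction n with
      | zero => simpa using base
      | succ n ihn =>
        rw [List.replicate_succ, List.cons_append]
        exact SChain.cons _ _ _ ihn

/-- The weight is the scaled `σ`. -/
lemma wP_cast {p : ℕ × ℕ} (h2 : 2 ≤ p.1) (h24 : p.1 ≤ 24) :
    ((wP p : ℚ)) = 5354228880 * sigmaP p := by
  have hdvd : p.1 ∣ 5354228880 := by
    have H : ∀ r < 25, 2 ≤ r → r ∣ 5354228880 := by decide
    exact H p.1 (by omega) h2
  have hle : 5354228880 / p.1 ≤ 5354228880 * p.1 :=
    le_trans (Nat.div_le_self _ _) (Nat.le_mul_of_pos_right _ (by omega))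
  have hr0 : (p.1 : ℚ) ≠ 0 := by
    have : (0:ℚ) < (p.1:ℚ) := by exact_mod_cast Nat.lt_of_lt_of_le (by norm_num) h2
    linarith
  rw [wP, Nat.cast_sub hle, Nat.cast_mul, Nat.cast_div hdvd hr0, sigmaP]
  push_cast
  field_simp

lemma wsum_cast : ∀ (B : Multiset (ℕ × ℕ)), (∀ p ∈ B, 2 ≤ p.1 ∧ p.1 ≤ 24) →
    (((B.map wP).sum : ℚ)) = 5354228880 * sigmaB B := by
  intro B
  induction B using Multiset.induction_on with
  | empty => intro _; simp [sigmaB]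
  | cons p C ih =>
    intro h
    have hp := h p (Multiset.mem_cons_self p C)
    have hC : ∀ q ∈ C, 2 ≤ q.1 ∧ q.1 ≤ 24 := fun q hq => h q (Multiset.mem_cons_of_mem hq)
    rw [Multiset.map_cons, Multiset.sum_cons, Nat.cast_add, ih hC, wP_cast hp.1 hp.2]
    unfold sigmaB
    rw [Multiset.map_cons, Multiset.sum_cons]
    ring

set_option maxRecDepth 1000000 in
set_option maxHeartbeats 1000000 in
lemma search_sound : ∀ B ∈ search 120 pairsList 128501493120,
    (∀ p ∈ B, IsNormalizedPair p ∧ 2 ≤ p.1 ∧ p.1 ≤ 24) ∧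
    (B.map wP).sum = 128501493120 := by decide

set_option maxRecDepth 1000000 in
set_option maxHeartbeats 1000000 in
lemma search_card : (search 120 pairsList 128501493120).toFinset.card = 24 := by decide

set_option maxRecDepth 100000 in
lemma mem_pairsList_aux :
    ∀ p ∈ Finset.range 25 ×ˢ Finset.range 13, IsNormalizedPair p → p ∈ pairsList := by decide

lemma pairsList_length : pairsList.length = 90 := by decide

set_option maxRecDepth 10000 in
lemma pairsList_sorted : pairsList.Pairwise (fun x y => wP x ≤ wP y) := by decide

end Aux

theorem baskets_sigma_eq_24_card :
    {B : Multiset (ℕ × ℕ) | IsBasket B ∧ sigmaB B = 24}.Finite ∧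
    {B : Multiset (ℕ × ℕ) | IsBasket B ∧ sigmaB B = 24}.ncard = 24 := by
  have hmemP : ∀ p : ℕ × ℕ, IsNormalizedPair p → p.1 ≤ 24 → p ∈ pairsList := by
    rintro ⟨r, a⟩ hp hr
    have ha : a < 13 := by
      obtain ⟨⟨_, _, _, _⟩, h2a⟩ := hp
      simp only at h2a
      omega
    exact mem_pairsList_aux (r, a)
      (Finset.mem_product.2 ⟨Finset.mem_range.2 (by omega), Finset.mem_range.2 ha⟩) hp
  have hkey : {B : Multiset (ℕ × ℕ) | IsBasket B ∧ sigmaB B = 24} =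
      ↑((search 120 pairsList 128501493120).toFinset) := by
    ext B
    simp only [Set.mem_setOf_eq, Finset.coe_sort_coe, Finset.mem_coe, List.mem_toFinset]
    constructor
    · rintro ⟨hB, hs⟩
      have hpos : ∀ p ∈ B, (3:ℚ)/2 ≤ sigmaP p := by
        intro p hp
        obtain ⟨⟨h2, _, _, _⟩, _⟩ := hB p hp
        have hr : (2:ℚ) ≤ (p.1 : ℚ) := by exact_mod_cast h2
        have hr0 : (0:ℚ) < (p.1 : ℚ) := by linarith
        have hinv : 1 / (p.1:ℚ) ≤ 1 / 2 := one_div_le_one_div_of_le (by norm_num) hr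
        unfold sigmaP
        linarith
      have hone : ∀ p ∈ B, sigmaP p ≤ 24 := by
        intro p hp
        obtain ⟨C, hC⟩ := Multiset.exists_cons_of_mem hp
        have h0 : 0 ≤ (C.map sigmaP).sum := by
          apply Multiset.sum_nonneg
          intro x hx
          obtain ⟨q, hq, rfl⟩ := Multiset.mem_map.1 hx
          have := hpos q (by rw [hC]; exact Multiset.mem_cons_of_mem hq)
          linarith
        have h1 : sigmaB B = sigmaP p + (C.map sigmaP).sum := by
          rw [hC]; simp [sigmaB]
        rw [hs] at h1
        linarith
      have hr24 : ∀ p ∈ B, p.1 ≤ 24 := by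
        intro p hp
        obtain ⟨⟨h2, _, _, _⟩, _⟩ := hB p hp
        have hr : (2:ℚ) ≤ (p.1 : ℚ) := by exact_mod_cast h2
        have hinv : 1 / (p.1:ℚ) ≤ 1 / 2 := one_div_le_one_div_of_le (by norm_num) hr
        have h24 := hone p hp
        unfold sigmaP at h24
        have h25 : (p.1 : ℚ) < 25 := by linarith
        have : p.1 < 25 := by exact_mod_cast h25
        omega
      have hmem : ∀ p ∈ B, p ∈ pairsList := fun p hp => hmemP p (hB p hp) (hr24 p hp)
      have hwpos : ∀ p ∈ B, 0 < wP p := by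
        intro p hp
        obtain ⟨⟨h2, _, _, _⟩, _⟩ := hB p hp
        have h1 : 5354228880 / p.1 ≤ 5354228880 := Nat.div_le_self _ _
        have h2' : 5354228880 * 2 ≤ 5354228880 * p.1 := Nat.mul_le_mul_left _ h2
        unfold wP
        omega
      have hwsum : (B.map wP).sum = 128501493120 := by
        have hc := wsum_cast B (fun p hp => ⟨(hB p hp).1.1, hr24 p hp⟩)
        rw [hs] at hc
        have h2 : (((B.map wP).sum : ℕ) : ℚ) = ((128501493120 : ℕ) : ℚ) := by
          rw [hc]; norm_num
        exact_mod_cast h2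
      obtain ⟨L, hLeq, hLch⟩ := exists_schain pairsList B hmem
      have hlen : L.length = Multiset.card B := by rw [← hLeq]; simp
      have hcard : Multiset.card B ≤ 16 := by
        have h1 : Multiset.card (B.map wP) • (8031343320:ℕ) ≤ (B.map wP).sum := by
          apply Multiset.card_nsmul_le_sum
          intro x hx
          obtain ⟨q, hq, rfl⟩ := Multiset.mem_map.1 hx
          obtain ⟨⟨h2, _, _, _⟩, _⟩ := hB q hq
          have hd : 5354228880 / q.1 ≤ 5354228880 / 2 := Nat.div_le_div_left h2 (by norm_num)
          have hm : 5354228880 * 2 ≤ 5354228880 * q.1 := Nat.mul_le_mul_left _ h2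
          unfold wP
          omega
        rw [Multiset.card_map, smul_eq_mul, hwsum] at h1
        omega
      have hfin := search_complete hLch 120 128501493120
        (by rw [hlen, pairsList_length]; omega)
        pairsList_sorted
        (fun q hq => hwpos q (by rw [← hLeq]; exact Multiset.mem_coe.2 hq))
        (by
          have h3 : ((↑L : Multiset (ℕ × ℕ)).map wP).sum = (L.map wP).sum := by simp
          rw [← h3, hLeq, hwsum])
      rwa [hLeq] at hfin
    · intro hBmem
      obtain ⟨hall, hw⟩ := search_sound B hBmem
      refine ⟨fun p hp => (hall p hp).1, ?_⟩
      have hc := wsum_cast B (fun p hp => (hall p hp).2)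
      rw [hw] at hc
      have h128 : (((128501493120:ℕ)) : ℚ) = 5354228880 * 24 := by norm_num
      rw [h128] at hc
      have h5 : (5354228880 : ℚ) ≠ 0 := by norm_num
      have := mul_left_cancel₀ h5 hc.symm
      linarith
  constructor
  · rw [hkey]; exact (search 120 pairsList 128501493120).toFinset.finite_toSet
  · rw [hkey, Set.ncard_coe_finset, search_card]
end

section
/- For N ≥ 1 let B_N denote the basket consisting of N copies of the quotient pair (2,1). The number of pairs (g,N) with N ≥ 1 and (g,B_N) ∈ L₃ is exactly 272, of which exactly 238 have g ≥ 2; the number of pairs (g,N) with N ≥ 1 and (g,B_N) ∈ L₄ is exactly 360, of which exactly 325 have g ≥ 2. -/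
open PowerSeries

section Aux

lemma bInv21 : bInv (2,1) = 1 := by
  show ((1 : ZMod 2)⁻¹).val = 1
  rw [inv_one]; rfl

lemma deltaB_rep (N : ℕ) : deltaB (Multiset.replicate N ((2,1) : ℕ × ℕ)) = N / 2 := by
  simp [deltaB, Multiset.map_replicate, Multiset.sum_replicate, deltaP, bInv21]
  ring

lemma sigmaB_rep (N : ℕ) : sigmaB (Multiset.replicate N ((2,1) : ℕ × ℕ)) = 3 * N / 2 := by
  simp [sigmaB, Multiset.map_replicate, Multiset.sum_replicate, sigmaP]
  ring

lemma basket_rep (N : ℕ) : IsBasket (Multiset.replicate N ((2,1) : ℕ × ℕ)) := by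
  intro p hp
  rw [Multiset.eq_of_mem_replicate hp]
  exact ⟨⟨by norm_num, by norm_num, by norm_num, by norm_num⟩, by norm_num⟩

lemma gmin_rep (N : ℕ) :
    gmin (Multiset.replicate N ((2,1) : ℕ × ℕ)) = max (-2) ((4 - (N:ℤ))/4 + 1) := by
  rw [gmin, deltaB_rep]
  congr 1
  rw [show (2 - (N:ℚ)/2)/2 = ((4 - (N:ℤ) : ℤ) : ℚ) / ((4:ℕ):ℚ) by push_cast; ring,
    Rat.floor_intCast_div_natCast]
  norm_num

lemma gmax3_rep (N : ℕ) :
    gmax (Multiset.replicate N ((2,1) : ℕ × ℕ)) 3 = (74 - 5*(N:ℤ))/2 := by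
  rw [gmax, deltaB_rep, sigmaB_rep]
  rw [show (2 - (N:ℚ)/2 + 3 * (24 - 3*N/2))/2 = ((74 - 5*(N:ℤ) : ℤ) : ℚ) / ((2:ℕ):ℚ) by
    push_cast; ring, Rat.floor_intCast_div_natCast]
  norm_num

lemma gmax4_rep (N : ℕ) :
    gmax (Multiset.replicate N ((2,1) : ℕ × ℕ)) 4 = (196 - 13*(N:ℤ))/4 := by
  rw [gmax, deltaB_rep, sigmaB_rep]
  rw [show (2 - (N:ℚ)/2 + 4 * (24 - 3*N/2))/2 = ((196 - 13*(N:ℤ) : ℤ) : ℚ) / ((4:ℕ):ℚ) by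
    push_cast; ring, Rat.floor_intCast_div_natCast]
  norm_num

lemma sigma_lt (N : ℕ) :
    sigmaB (Multiset.replicate N ((2,1) : ℕ × ℕ)) < 24 ↔ N ≤ 15 := by
  rw [sigmaB_rep]
  constructor
  · intro h
    by_contra hn
    push_neg at hn
    have : (16:ℚ) ≤ N := by exact_mod_cast hn
    linarith
  · intro h
    have : (N:ℚ) ≤ 15 := by exact_mod_cast h
    linarith

lemma mem3 (g : ℤ) (N : ℕ) :
    (g, Multiset.replicate N ((2,1) : ℕ × ℕ)) ∈ Lset 3 ↔
      N ≤ 15 ∧ max (-2) ((4 - (N:ℤ))/4 + 1) ≤ g ∧ g ≤ (74 - 5*(N:ℤ))/2 := by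
  simp only [Lset, Set.mem_setOf_eq, sigma_lt, gmin_rep, gmax3_rep,
    iff_true_intro (basket_rep N), true_and]

lemma mem4 (g : ℤ) (N : ℕ) :
    (g, Multiset.replicate N ((2,1) : ℕ × ℕ)) ∈ Lset 4 ↔
      N ≤ 15 ∧ max (-2) ((4 - (N:ℤ))/4 + 1) ≤ g ∧ g ≤ (196 - 13*(N:ℤ))/4 := by
  simp only [Lset, Set.mem_setOf_eq, sigma_lt, gmin_rep, gmax4_rep,
    iff_true_intro (basket_rep N), true_and]

/-- Generic finset of pairs with given per-`N` bounds. -/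
noncomputable def Fgen (lo : ℕ → ℤ) (hi : ℕ → ℤ) : Finset (ℤ × ℕ) :=
  (Finset.Icc (1:ℕ) 15).biUnion fun N =>
    (Finset.Icc (lo N) (hi N)).image fun g => (g, N)

lemma mem_Fgen (lo hi : ℕ → ℤ) (g : ℤ) (N : ℕ) :
    (g, N) ∈ Fgen lo hi ↔ (1 ≤ N ∧ N ≤ 15) ∧ lo N ≤ g ∧ g ≤ hi N := by
  simp only [Fgen, Finset.mem_biUnion, Finset.mem_image, Finset.mem_Icc]
  constructor
  · rintro ⟨M, hM, g', hg', h⟩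
    obtain ⟨rfl, rfl⟩ := Prod.mk.injEq .. ▸ h
    exact ⟨hM, hg'⟩
  · rintro ⟨hM, hg⟩
    exact ⟨N, hM, g, hg, rfl⟩

lemma card_Fgen (lo hi : ℕ → ℤ) :
    (Fgen lo hi).card = ∑ N ∈ Finset.Icc (1:ℕ) 15, (hi N + 1 - lo N).toNat := by
  rw [Fgen, Finset.card_biUnion]
  · refine Finset.sum_congr rfl fun N _ => ?_
    rw [Finset.card_image_of_injective _ (fun a b hab => congrArg Prod.fst hab),
      Int.card_Icc]
  · intro x hx y hy hxy
    rw [Function.onFun, Finset.disjoint_left]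
    rintro ⟨g, M⟩ hmx hmy
    simp only [Finset.mem_image] at hmx hmy
    obtain ⟨g1, -, h1⟩ := hmx
    obtain ⟨g2, -, h2⟩ := hmy
    exact hxy ((congrArg Prod.snd h1).trans (congrArg Prod.snd h2).symm)

lemma finite_and_ncard (S : Set (ℤ × ℕ)) (F : Finset (ℤ × ℕ)) (n : ℕ)
    (hS : S = ↑F) (hF : F.card = n) : S.Finite ∧ S.ncard = n := by
  subst hS
  exact ⟨F.finite_toSet, by rw [Set.ncard_coe_finset, hF]⟩

def lo0 (N : ℕ) : ℤ := max (-2) ((4 - (N:ℤ))/4 + 1)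
def lo2 (N : ℕ) : ℤ := max 2 (lo0 N)
def hi3 (N : ℕ) : ℤ := (74 - 5*(N:ℤ))/2
def hi4 (N : ℕ) : ℤ := (196 - 13*(N:ℤ))/4

end Aux

theorem index_two_baskets_count :
    ({p : ℤ × ℕ | 1 ≤ p.2 ∧ (p.1, Multiset.replicate p.2 ((2, 1) : ℕ × ℕ)) ∈ Lset 3}.Finite ∧
     {p : ℤ × ℕ | 1 ≤ p.2 ∧ (p.1, Multiset.replicate p.2 ((2, 1) : ℕ × ℕ)) ∈ Lset 3}.ncard = 272) ∧
    ({p : ℤ × ℕ | 1 ≤ p.2 ∧ 2 ≤ p.1 ∧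
        (p.1, Multiset.replicate p.2 ((2, 1) : ℕ × ℕ)) ∈ Lset 3}.Finite ∧
     {p : ℤ × ℕ | 1 ≤ p.2 ∧ 2 ≤ p.1 ∧
        (p.1, Multiset.replicate p.2 ((2, 1) : ℕ × ℕ)) ∈ Lset 3}.ncard = 238) ∧
    ({p : ℤ × ℕ | 1 ≤ p.2 ∧ (p.1, Multiset.replicate p.2 ((2, 1) : ℕ × ℕ)) ∈ Lset 4}.Finite ∧
     {p : ℤ × ℕ | 1 ≤ p.2 ∧ (p.1, Multiset.replicate p.2 ((2, 1) : ℕ × ℕ)) ∈ Lset 4}.ncard = 360) ∧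
    ({p : ℤ × ℕ | 1 ≤ p.2 ∧ 2 ≤ p.1 ∧
        (p.1, Multiset.replicate p.2 ((2, 1) : ℕ × ℕ)) ∈ Lset 4}.Finite ∧
     {p : ℤ × ℕ | 1 ≤ p.2 ∧ 2 ≤ p.1 ∧
        (p.1, Multiset.replicate p.2 ((2, 1) : ℕ × ℕ)) ∈ Lset 4}.ncard = 325) := by
  refine ⟨?_, ?_, ?_, ?_⟩
  · refine finite_and_ncard _ (Fgen lo0 hi3) 272 ?_ (by rw [card_Fgen]; decide)
    ext ⟨g, N⟩
    rw [Set.mem_setOf_eq, mem3, Finset.mem_coe, mem_Fgen]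
    unfold lo0 hi3
    omega
  · refine finite_and_ncard _ (Fgen lo2 hi3) 238 ?_ (by rw [card_Fgen]; decide)
    ext ⟨g, N⟩
    rw [Set.mem_setOf_eq, mem3, Finset.mem_coe, mem_Fgen]
    unfold lo2 lo0 hi3
    omega
  · refine finite_and_ncard _ (Fgen lo0 hi4) 360 ?_ (by rw [card_Fgen]; decide)
    ext ⟨g, N⟩
    rw [Set.mem_setOf_eq, mem4, Finset.mem_coe, mem_Fgen]
    unfold lo0 hi4
    omega
  · refine finite_and_ncard _ (Fgen lo2 hi4) 325 ?_ (by rw [card_Fgen]; decide)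
    ext ⟨g, N⟩
    rw [Set.mem_setOf_eq, mem4, Finset.mem_coe, mem_Fgen]
    unfold lo2 lo0 hi4
    omega
end
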